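/- Let μ > 0, n ∈ ℕ with n > 1, and f ∈ C([0,1]). Then sup_{x ∈ [0,1]} |𝓛ₙᴷ(f, x) − f(x)| ≤ ω(f_μ, 1/√(n+1)) · ln(2+μ) · (1 + 1/(2√(n+1)) + √2) + ω(f_μ, γ_n) · ln(2+μ), where γ_n := max_{x ∈ [0,1]} |a_{n+1}(x) − x|. -/

import Mathlib

open MeasureTheory Filter Set

/-- The logarithmic weight `ln_μ(x) = ln(1+μ+x)`. -/
noncomputable def lnMu (μ x : ℝ) : ℝ := Real.log (1 + μ + x)

/-- The function `a_{n+1}(x)` from the paper. -/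
noncomputable def aFun (μ : ℝ) (n : ℕ) (x : ℝ) : ℝ :=
  Real.log (1 + x / (((n : ℝ) + 1) * (1 + μ))) /
    Real.log (1 + 1 / (((n : ℝ) + 1) * (1 + μ)))

/-- Bernstein basis polynomial `p_{n,k}(x) = C(n,k) x^k (1-x)^{n-k}`. -/
noncomputable def bern (n k : ℕ) (x : ℝ) : ℝ :=
  (n.choose k : ℝ) * x ^ k * (1 - x) ^ (n - k)

/-- The Kantorovich logarithmic operator `𝓛ₙᴷ(f,x)`. -/
noncomputable def LK (μ : ℝ) (n : ℕ) (f : ℝ → ℝ) (x : ℝ) : ℝ :=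
  lnMu μ x * ∑ k ∈ Finset.range (n + 1),
    bern n k (aFun μ n x) * ((n : ℝ) + 1) *
      ∫ t in ((k : ℝ) / ((n : ℝ) + 1))..(((k : ℝ) + 1) / ((n : ℝ) + 1)), f t / lnMu μ t

/-- `γ_n := max_{x ∈ [0,1]} |a_{n+1}(x) - x|`. -/
noncomputable def gammaN (μ : ℝ) (n : ℕ) : ℝ :=
  ⨆ x : Set.Icc (0 : ℝ) 1, |aFun μ n (x : ℝ) - (x : ℝ)|

/-- Unweighted L^p norm `(∫₀¹ |f|^p)^(1/p)` on [0,1]. -/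
noncomputable def normP (p : ℝ) (f : ℝ → ℝ) : ℝ :=
  (∫ x in (0:ℝ)..1, |f x| ^ p) ^ (1 / p)

/-- Weighted L^p norm `(∫₀¹ |f/ln_μ|^p)^(1/p)` on [0,1]. -/
noncomputable def normPMu (μ p : ℝ) (f : ℝ → ℝ) : ℝ :=
  (∫ x in (0:ℝ)..1, |f x / lnMu μ x| ^ p) ^ (1 / p)

/-- Modulus of continuity on `[0,1]`. -/
noncomputable def omegaMod (g : ℝ → ℝ) (δ : ℝ) : ℝ :=
  sSup {v | ∃ x ∈ Set.Icc (0:ℝ) 1, ∃ t ∈ Set.Icc (0:ℝ) 1, |t - x| ≤ δ ∧ v = |g t - g x|}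

/-!
Writing `g = f / ln_μ` and `Kₙ` for the classical Kantorovich operator, one has
`𝓛ₙᴷ(f, x) = ln_μ(x) · Kₙ(g, a_{n+1}(x))`. `Kₙ` is positive, reproduces constants and has second
central moment `Kₙ((t - y)², y) = ((n - 1) y (1 - y) + 1/3) / (n + 1)² ≤ 1 / (3 (n + 1))`.
Combined with `|g t - g y| ≤ (1 + (t - y)² / δ²) ω(g, δ)` at `δ = 1 / √(n + 1)` this gives
`|Kₙ(g, y) - g y| ≤ (4/3) ω(g, δ)`. The shift from `y = a_{n+1}(x)` back to `x` costs at most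
`ω(g, γₙ)`, and `ln_μ ≤ ln(2 + μ)` on `[0, 1]`; finally `4/3 ≤ 1 + √2`.
-/

section Bernstein

lemma bern_eq_eval (n k : ℕ) (y : ℝ) : bern n k y = (bernsteinPolynomial ℝ n k).eval y := by
  simp [bern, bernsteinPolynomial]

lemma bern_nonneg (n k : ℕ) {y : ℝ} (hy : y ∈ Icc (0 : ℝ) 1) : 0 ≤ bern n k y :=
  mul_nonneg (mul_nonneg (by positivity) (pow_nonneg hy.1 _)) (pow_nonneg (sub_nonneg.2 hy.2) _)

lemma sum_bern (n : ℕ) (y : ℝ) : ∑ k ∈ Finset.range (n + 1), bern n k y = 1 := by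
  simp [bern_eq_eval, ← Polynomial.eval_finsetSum, bernsteinPolynomial.sum]

lemma sum_mul_bern (n : ℕ) (y : ℝ) :
    ∑ k ∈ Finset.range (n + 1), (k : ℝ) * bern n k y = n * y := by
  simpa [Polynomial.eval_finsetSum, bern_eq_eval] using
    congrArg (Polynomial.eval y) (bernsteinPolynomial.sum_smul ℝ n)

lemma sum_sq_sub_mul_bern (n : ℕ) (y : ℝ) :
    ∑ k ∈ Finset.range (n + 1), (n * y - k) ^ 2 * bern n k y = n * y * (1 - y) := by
  simpa [Polynomial.eval_finsetSum, bern_eq_eval] using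
    congrArg (Polynomial.eval y) (bernsteinPolynomial.variance ℝ n)

end Bernstein

section ModulusOfContinuity

variable {g : ℝ → ℝ} {M δ : ℝ}

lemma abs_sub_le_omegaMod (hM : ∀ x ∈ Icc (0 : ℝ) 1, |g x| ≤ M) {x t : ℝ}
    (hx : x ∈ Icc (0 : ℝ) 1) (ht : t ∈ Icc (0 : ℝ) 1) (hxt : |t - x| ≤ δ) :
    |g t - g x| ≤ omegaMod g δ := by
  refine le_csSup ⟨2 * M, ?_⟩ ⟨x, hx, t, ht, hxt, rfl⟩
  rintro v ⟨x, hx, t, ht, -, rfl⟩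
  linarith [abs_sub (g t) (g x), hM x hx, hM t ht]

lemma omegaMod_nonneg (hM : ∀ x ∈ Icc (0 : ℝ) 1, |g x| ≤ M) (hδ : 0 ≤ δ) :
    0 ≤ omegaMod g δ := by
  simpa using abs_sub_le_omegaMod hM (x := 0) (t := 0) (by simp) (by simp) (by simpa)

lemma abs_sub_le_nat_mul_omegaMod (hM : ∀ x ∈ Icc (0 : ℝ) 1, |g x| ≤ M) (m : ℕ) {x t : ℝ}
    (hx : x ∈ Icc (0 : ℝ) 1) (ht : t ∈ Icc (0 : ℝ) 1) (hxt : |t - x| ≤ m * δ) :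
    |g t - g x| ≤ m * omegaMod g δ := by
  rcases Nat.eq_zero_or_pos m with rfl | hm
  · have : t = x := by simpa [sub_eq_zero] using hxt
    simp [this]
  have hmR : (0 : ℝ) < m := by exact_mod_cast hm
  set p : ℕ → ℝ := fun i => x + ((i : ℝ) / m) • (t - x)
  have hp_mem : ∀ i ≤ m, p i ∈ Icc (0 : ℝ) 1 := fun i hi =>
    (convex_Icc 0 1).add_smul_sub_mem hx ht
      ⟨by positivity, (div_le_one hmR).2 (by exact_mod_cast hi)⟩
  have hp_step : ∀ i, |p (i + 1) - p i| ≤ δ := fun i => by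
    have : p (i + 1) - p i = (t - x) / m := by simp only [p, smul_eq_mul]; push_cast; field_simp; ring
    rw [this, abs_div, abs_of_pos hmR, div_le_iff₀ hmR]
    linarith
  have hp0 : p 0 = x := by simp [p]
  have hpm : p m = t := by simp [p, hmR.ne']
  calc |g t - g x| = |∑ i ∈ Finset.range m, (g (p (i + 1)) - g (p i))| := by
        rw [Finset.sum_range_sub (fun i => g (p i)), hp0, hpm]
    _ ≤ ∑ i ∈ Finset.range m, |g (p (i + 1)) - g (p i)| := Finset.abs_sum_le_sum_abs _ _
    _ ≤ ∑ _i ∈ Finset.range m, omegaMod g δ := Finset.sum_le_sum fun i hi =>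
        abs_sub_le_omegaMod hM (hp_mem i (by simp at hi; omega))
          (hp_mem (i + 1) (Finset.mem_range.1 hi)) (hp_step i)
    _ = m * omegaMod g δ := by simp

lemma abs_sub_le_one_add_sq_div_mul_omegaMod (hM : ∀ x ∈ Icc (0 : ℝ) 1, |g x| ≤ M)
    (hδ : 0 < δ) {x t : ℝ} (hx : x ∈ Icc (0 : ℝ) 1) (ht : t ∈ Icc (0 : ℝ) 1) :
    |g t - g x| ≤ (1 + (t - x) ^ 2 / δ ^ 2) * omegaMod g δ := by
  set u := |t - x| / δ
  have hu : 0 ≤ u := by positivity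
  have hu2 : u ^ 2 = (t - x) ^ 2 / δ ^ 2 := by rw [div_pow, sq_abs]
  have hceil : (⌈u⌉₊ : ℝ) ≤ 1 + u ^ 2 := by
    rcases le_or_gt u 1 with hu1 | hu1
    · have : ⌈u⌉₊ ≤ 1 := Nat.ceil_le.2 (by simpa using hu1)
      have : (⌈u⌉₊ : ℝ) ≤ 1 := by exact_mod_cast this
      nlinarith
    · nlinarith [Nat.ceil_lt_add_one hu]
  have hxt : |t - x| ≤ ⌈u⌉₊ * δ := (div_le_iff₀ hδ).1 (Nat.le_ceil u)
  rw [← hu2]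
  exact (abs_sub_le_nat_mul_omegaMod hM _ hx ht hxt).trans
    (mul_le_mul_of_nonneg_right hceil (omegaMod_nonneg hM hδ.le))

end ModulusOfContinuity

section Kantorovich

noncomputable def cellAverage (n k : ℕ) (g : ℝ → ℝ) : ℝ :=
  ((n : ℝ) + 1) * ∫ t in ((k : ℝ) / ((n : ℝ) + 1))..(((k : ℝ) + 1) / ((n : ℝ) + 1)), g t

noncomputable def kantorovich (n : ℕ) (g : ℝ → ℝ) (y : ℝ) : ℝ :=
  ∑ k ∈ Finset.range (n + 1), bern n k y * cellAverage n k g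

lemma LK_eq_lnMu_mul_kantorovich (μ : ℝ) (n : ℕ) (f : ℝ → ℝ) (x : ℝ) :
    LK μ n f x = lnMu μ x * kantorovich n (fun t => f t / lnMu μ t) (aFun μ n x) := by
  simp only [LK, kantorovich, cellAverage, mul_assoc]

variable {n k : ℕ}

lemma cell_le (n k : ℕ) : (k : ℝ) / ((n : ℝ) + 1) ≤ ((k : ℝ) + 1) / ((n : ℝ) + 1) := by
  gcongr; linarith

lemma cell_length (n k : ℕ) :
    ((n : ℝ) + 1) * (((k : ℝ) + 1) / ((n : ℝ) + 1) - (k : ℝ) / ((n : ℝ) + 1)) = 1 := by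
  field_simp; ring

lemma uIcc_cell_subset (hk : k ∈ Finset.range (n + 1)) :
    uIcc ((k : ℝ) / ((n : ℝ) + 1)) (((k : ℝ) + 1) / ((n : ℝ) + 1)) ⊆ Icc 0 1 := by
  have hkn : (k : ℝ) + 1 ≤ (n : ℝ) + 1 := by
    exact_mod_cast Nat.succ_le_succ (Nat.lt_succ_iff.1 (Finset.mem_range.1 hk))
  rw [uIcc_of_le (cell_le n k)]
  exact Icc_subset_Icc (by positivity) ((div_le_one (by positivity)).2 hkn)

lemma cellAverage_const_add_mul {q : ℝ → ℝ} (hq : Continuous q) (A B : ℝ) :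
    cellAverage n k (fun t => A + B * q t) = A + B * cellAverage n k q := by
  rw [cellAverage, cellAverage, intervalIntegral.integral_add intervalIntegrable_const
    ((hq.intervalIntegrable _ _).const_mul B), intervalIntegral.integral_const,
    intervalIntegral.integral_const_mul, smul_eq_mul, mul_add, ← mul_assoc, cell_length]
  ring

lemma abs_cellAverage_sub_le {g h : ℝ → ℝ} {c : ℝ} (hk : k ∈ Finset.range (n + 1))
    (hg : IntervalIntegrable g volume 0 1) (hh : IntervalIntegrable h volume 0 1)
    (hgh : ∀ t ∈ Icc (0 : ℝ) 1, |g t - c| ≤ h t) :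
    |cellAverage n k g - c| ≤ cellAverage n k h := by
  have hsub := uIcc_cell_subset hk
  rw [← uIcc_of_le zero_le_one] at hsub
  have hgk := hg.mono_set hsub
  have hN : (0 : ℝ) < (n : ℝ) + 1 := by positivity
  have hshift : cellAverage n k g - c = cellAverage n k (fun t => g t - c) := by
    rw [cellAverage, cellAverage, intervalIntegral.integral_sub hgk intervalIntegrable_const,
      intervalIntegral.integral_const, smul_eq_mul, mul_sub, ← mul_assoc, cell_length, one_mul]
  rw [hshift, cellAverage, cellAverage, abs_mul, abs_of_pos hN]
  gcongr
  refine (intervalIntegral.abs_integral_le_integral_abs (cell_le n k)).trans ?_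
  exact intervalIntegral.integral_mono_on (cell_le n k) (hgk.sub intervalIntegrable_const).abs
    (hh.mono_set hsub) fun t ht => hgh t (uIcc_cell_subset hk (Icc_subset_uIcc ht))

lemma cellAverage_sq_sub (n k : ℕ) (y : ℝ) :
    cellAverage n k (fun t => (t - y) ^ 2) =
      ((n * y - k) ^ 2 + (2 * y - 1) * (n * y - k) + (y ^ 2 - y + 1 / 3)) / ((n : ℝ) + 1) ^ 2 := by
  have hN : (n : ℝ) + 1 ≠ 0 := by positivity
  rw [cellAverage, intervalIntegral.integral_comp_sub_right (fun t => t ^ 2), integral_pow]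
  norm_num
  field_simp
  ring

lemma kantorovich_const_add_mul {q : ℝ → ℝ} (hq : Continuous q) (A B y : ℝ) :
    kantorovich n (fun t => A + B * q t) y = A + B * kantorovich n q y := by
  simp only [kantorovich, cellAverage_const_add_mul hq, mul_add, Finset.sum_add_distrib,
    ← Finset.sum_mul, sum_bern, one_mul, Finset.mul_sum, mul_left_comm B]

lemma abs_kantorovich_sub_le {g h : ℝ → ℝ} {c y : ℝ} (hg : IntervalIntegrable g volume 0 1)
    (hh : IntervalIntegrable h volume 0 1) (hy : y ∈ Icc (0 : ℝ) 1)
    (hgh : ∀ t ∈ Icc (0 : ℝ) 1, |g t - c| ≤ h t) :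
    |kantorovich n g y - c| ≤ kantorovich n h y := by
  have hsplit : kantorovich n g y - c =
      ∑ k ∈ Finset.range (n + 1), bern n k y * (cellAverage n k g - c) := by
    simp only [kantorovich, mul_sub, Finset.sum_sub_distrib, ← Finset.sum_mul, sum_bern, one_mul]
  rw [hsplit]
  refine (Finset.abs_sum_le_sum_abs _ _).trans (Finset.sum_le_sum fun k hk => ?_)
  rw [abs_mul, abs_of_nonneg (bern_nonneg n k hy)]
  exact mul_le_mul_of_nonneg_left (abs_cellAverage_sub_le hk hg hh hgh) (bern_nonneg n k hy)

lemma kantorovich_sq_sub (n : ℕ) (y : ℝ) :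
    kantorovich n (fun t => (t - y) ^ 2) y =
      (((n : ℝ) - 1) * (y * (1 - y)) + 1 / 3) / ((n : ℝ) + 1) ^ 2 := by
  have hmean : ∑ k ∈ Finset.range (n + 1), (n * y - k) * bern n k y = 0 := by
    simp only [sub_mul, Finset.sum_sub_distrib, ← Finset.mul_sum, sum_bern, sum_mul_bern]
    ring
  have hterm : ∀ k ∈ Finset.range (n + 1), bern n k y * cellAverage n k (fun t => (t - y) ^ 2) =
      ((n * y - k) ^ 2 * bern n k y + (2 * y - 1) * ((n * y - k) * bern n k y)
        + (y ^ 2 - y + 1 / 3) * bern n k y) / ((n : ℝ) + 1) ^ 2 := fun k _ => by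
    rw [cellAverage_sq_sub]; ring
  rw [kantorovich, Finset.sum_congr rfl hterm, ← Finset.sum_div, Finset.sum_add_distrib,
    Finset.sum_add_distrib, ← Finset.mul_sum, ← Finset.mul_sum, sum_sq_sub_mul_bern, hmean,
    sum_bern]
  ring

lemma kantorovich_sq_sub_le (n : ℕ) {y : ℝ} (hy : y ∈ Icc (0 : ℝ) 1) :
    kantorovich n (fun t => (t - y) ^ 2) y ≤ 1 / (3 * ((n : ℝ) + 1)) := by
  have hvar : y * (1 - y) ≤ 1 / 4 := by nlinarith [sq_nonneg (2 * y - 1)]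
  have hvar0 : 0 ≤ y * (1 - y) := mul_nonneg hy.1 (sub_nonneg.2 hy.2)
  have key : ((n : ℝ) - 1) * (y * (1 - y)) + 1 / 3 ≤ ((n : ℝ) + 1) / 3 := by
    nlinarith [mul_nonneg n.cast_nonneg (sub_nonneg.2 hvar)]
  rw [kantorovich_sq_sub]
  calc _ ≤ (((n : ℝ) + 1) / 3) / ((n : ℝ) + 1) ^ 2 := by gcongr
    _ = 1 / (3 * ((n : ℝ) + 1)) := by field_simp

end Kantorovich

lemma abs_kantorovich_sub_le_omegaMod {g : ℝ → ℝ} {M y : ℝ}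
    (hg : IntervalIntegrable g volume 0 1) (hM : ∀ x ∈ Icc (0 : ℝ) 1, |g x| ≤ M)
    (hy : y ∈ Icc (0 : ℝ) 1) (n : ℕ) :
    |kantorovich n g y - g y| ≤ 4 / 3 * omegaMod g (1 / Real.sqrt ((n : ℝ) + 1)) := by
  set δ := 1 / Real.sqrt ((n : ℝ) + 1)
  have hδ : 0 < δ := by positivity
  have hδ2 : 1 / δ ^ 2 = (n : ℝ) + 1 := by
    rw [one_div_pow, Real.sq_sqrt (by positivity), one_div_one_div]
  set ω := omegaMod g δ
  have hbound : ∀ t ∈ Icc (0 : ℝ) 1, |g t - g y| ≤ ω + ω * ((n : ℝ) + 1) * (t - y) ^ 2 :=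
    fun t ht => (abs_sub_le_one_add_sq_div_mul_omegaMod hM hδ hy ht).trans_eq (by
      rw [← hδ2]; ring)
  have hquad : Continuous fun t : ℝ => (t - y) ^ 2 := by fun_prop
  calc |kantorovich n g y - g y|
      ≤ kantorovich n (fun t => ω + ω * ((n : ℝ) + 1) * (t - y) ^ 2) y :=
        abs_kantorovich_sub_le hg (Continuous.intervalIntegrable (by fun_prop) _ _) hy hbound
    _ = ω + ω * ((n : ℝ) + 1) * kantorovich n (fun t => (t - y) ^ 2) y :=
        kantorovich_const_add_mul hquad _ _ _
    _ ≤ ω + ω * ((n : ℝ) + 1) * (1 / (3 * ((n : ℝ) + 1))) := by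
        have := omegaMod_nonneg hM hδ.le
        gcongr
        exact kantorovich_sq_sub_le n hy
    _ = 4 / 3 * ω := by field_simp; ring

lemma lnMu_pos {μ x : ℝ} (h : 0 < μ + x) : 0 < lnMu μ x :=
  Real.log_pos (by linarith)

lemma continuousOn_lnMu {μ : ℝ} (hμ : -1 < μ) : ContinuousOn (lnMu μ) (Icc 0 1) :=
  Real.continuousOn_log.comp (by fun_prop) fun t ht =>
    (show (0 : ℝ) < 1 + μ + t by linarith [ht.1]).ne'

lemma lnMu_le_log_two_add {μ x : ℝ} (h : 0 < 1 + μ + x) (hx : x ≤ 1) :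
    lnMu μ x ≤ Real.log (2 + μ) :=
  Real.log_le_log h (by linarith)

lemma aFun_mem_Icc {μ : ℝ} (hμ : -1 < μ) (n : ℕ) {x : ℝ} (hx : x ∈ Icc (0 : ℝ) 1) :
    aFun μ n x ∈ Icc (0 : ℝ) 1 := by
  set c := ((n : ℝ) + 1) * (1 + μ)
  have hc : 0 < c := mul_pos (by positivity) (by linarith)
  have hxc : 0 ≤ x / c := div_nonneg hx.1 hc.le
  have hden : 0 < Real.log (1 + 1 / c) := Real.log_pos (by simp [hc])
  refine ⟨div_nonneg (Real.log_nonneg (by linarith)) hden.le, (div_le_one hden).2 ?_⟩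
  exact Real.log_le_log (by linarith) (by gcongr; exact hx.2)

lemma abs_aFun_sub_le_gammaN {μ : ℝ} (hμ : -1 < μ) (n : ℕ) {x : ℝ} (hx : x ∈ Icc (0 : ℝ) 1) :
    |aFun μ n x - x| ≤ gammaN μ n := by
  refine le_ciSup (f := fun z : Icc (0 : ℝ) 1 => |aFun μ n z - z|) ⟨1, ?_⟩ ⟨x, hx⟩
  rintro v ⟨z, rfl⟩
  have ha := aFun_mem_Icc hμ n z.2
  exact abs_sub_le_iff.2 ⟨by linarith [z.2.1, ha.2], by linarith [z.2.2, ha.1]⟩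

theorem stmt15_general (μ : ℝ) (hμ : 0 < μ) (n : ℕ) (f : ℝ → ℝ)
    (hf : ContinuousOn f (Set.Icc 0 1)) :
    ∀ x ∈ Set.Icc (0:ℝ) 1,
      |LK μ n f x - f x| ≤
        omegaMod (fun t => f t / lnMu μ t) (1 / Real.sqrt ((n : ℝ) + 1)) *
            Real.log (2 + μ) *
            (1 + 1 / (2 * Real.sqrt ((n : ℝ) + 1)) + Real.sqrt 2) +
          omegaMod (fun t => f t / lnMu μ t) (gammaN μ n) * Real.log (2 + μ) := by
  intro x hx
  set g := fun t => f t / lnMu μ t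
  have hln : ∀ t ∈ Icc (0 : ℝ) 1, 0 < lnMu μ t := fun t ht => lnMu_pos (by linarith [ht.1])
  have hg : ContinuousOn g (Icc 0 1) :=
    hf.div (continuousOn_lnMu (by linarith)) fun t ht => (hln t ht).ne'
  obtain ⟨M, hM⟩ : ∃ M, ∀ t ∈ Icc (0 : ℝ) 1, |g t| ≤ M := by
    simpa only [Real.norm_eq_abs] using isCompact_Icc.exists_bound_of_continuousOn hg
  have hy := aFun_mem_Icc (by linarith) n hx
  have hK := abs_kantorovich_sub_le_omegaMod (hg.intervalIntegrable_of_Icc zero_le_one) hM hy n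
  have hshift := abs_sub_le_omegaMod hM hx hy (abs_aFun_sub_le_gammaN (by linarith) n hx)
  have hlog : 0 < Real.log (2 + μ) := Real.log_pos (by linarith)
  have hconst : 4 / 3 ≤ 1 + 1 / (2 * Real.sqrt ((n : ℝ) + 1)) + Real.sqrt 2 := by
    have : 1 ≤ Real.sqrt 2 := Real.one_le_sqrt.2 one_le_two
    have : 0 ≤ 1 / (2 * Real.sqrt ((n : ℝ) + 1)) := by positivity
    linarith
  have hω := omegaMod_nonneg hM (by positivity : 0 ≤ 1 / Real.sqrt ((n : ℝ) + 1))
  calc |LK μ n f x - f x| = lnMu μ x * |kantorovich n g (aFun μ n x) - g x| := by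
        rw [LK_eq_lnMu_mul_kantorovich, ← abs_of_pos (hln x hx), ← abs_mul, mul_sub,
          abs_of_pos (hln x hx), mul_div_cancel₀ _ (hln x hx).ne']
    _ ≤ Real.log (2 + μ) * (4 / 3 * omegaMod g (1 / Real.sqrt ((n : ℝ) + 1)) +
          omegaMod g (gammaN μ n)) :=
        mul_le_mul (lnMu_le_log_two_add (by linarith [hx.1]) hx.2)
          ((abs_sub_le _ _ _).trans (add_le_add hK hshift)) (abs_nonneg _) hlog.le
    _ ≤ _ := by nlinarith [mul_le_mul_of_nonneg_left hconst (mul_nonneg hω hlog.le)]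

theorem stmt15 (μ : ℝ) (hμ : 0 < μ) (n : ℕ) (hn : 1 < n) (f : ℝ → ℝ)
    (hf : ContinuousOn f (Set.Icc 0 1)) :
    ∀ x ∈ Set.Icc (0:ℝ) 1,
      |LK μ n f x - f x| ≤
        omegaMod (fun t => f t / lnMu μ t) (1 / Real.sqrt ((n : ℝ) + 1)) *
            Real.log (2 + μ) *
            (1 + 1 / (2 * Real.sqrt ((n : ℝ) + 1)) + Real.sqrt 2) +
          omegaMod (fun t => f t / lnMu μ t) (gammaN μ n) * Real.log (2 + μ) :=
  stmt15_general μ hμ n f hf
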